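/- Uniqueness and characterization of the equilibrium flow in the Logit case (part of Theorem 3(iii)): assume n x > 0 for all x and m y > 0 for all y. For a feasible flow (μˢ, μᵈ), set μ_{x0} = n x − ∑_z μˢ x z and μ_{0y} = m y − ∑_z μᵈ z y, and define the entropic welfare S(μˢ, μᵈ) = ∑_{x,z} μˢ x z · α x z + ∑_{z,y} μᵈ z y · γ z y − ∑_x (∑_z μˢ x z · log(μˢ x z / n x) + μ_{x0} · log(μ_{x0} / n x)) − ∑_y (∑_z μᵈ z y · log(μᵈ z y / m y) + μ_{0y} · log(μ_{0y} / m y)), with the convention 0 · log 0 = 0. Then S attains its maximum over the set of feasible flows at exactly one feasible flow (μˢ*, μᵈ*); moreover, for any p* minimizing W(p) = ∑_x n x · log(1 + ∑_z exp(α x z + p z)) + ∑_y m y · log(1 + ∑_z exp(γ z y − p z)) over p : Z → ℝ, the maximizer is given by μˢ* x z = n x · exp(α x z + p* z)/(1 + ∑_{z'} exp(α x z' + p* z')) and μᵈ* z y = m y · exp(γ z y − p* z)/(1 + ∑_{z'} exp(γ z' y − p* z')). -/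

import Mathlib

open Finset MeasureTheory Real

variable {X Y Z : Type*} [Fintype X] [Fintype Y] [Fintype Z]
  [Nonempty X] [Nonempty Y] [Nonempty Z]

/-- A pair of supply/demand functions is a feasible flow. -/
def FeasibleFlow (n : X → ℝ) (m : Y → ℝ) (μs : X → Z → ℝ) (μd : Z → Y → ℝ) : Prop :=
  (∀ x z, 0 ≤ μs x z) ∧ (∀ z y, 0 ≤ μd z y) ∧
    (∀ x, ∑ z, μs x z ≤ n x) ∧ (∀ y, ∑ z, μd z y ≤ m y) ∧
    (∀ z, ∑ x, μs x z = ∑ y, μd z y)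

/-- The dual welfare function over prices in the Logit specification. -/
noncomputable def Wlogit (n : X → ℝ) (m : Y → ℝ) (α : X → Z → ℝ) (γ : Z → Y → ℝ)
    (p : Z → ℝ) : ℝ :=
  (∑ x, n x * Real.log (1 + ∑ z, Real.exp (α x z + p z))) +
    ∑ y, m y * Real.log (1 + ∑ z, Real.exp (γ z y - p z))

/-- Generalized entropy of a flow in the Logit specification (note that in Lean
`0 * Real.log 0 = 0`, which implements the convention `0 · log 0 = 0`). -/
noncomputable def entropyE (n : X → ℝ) (m : Y → ℝ)
    (μs : X → Z → ℝ) (μd : Z → Y → ℝ) : ℝ :=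
  (∑ x, ((∑ z, μs x z * Real.log (μs x z / n x)) +
      (n x - ∑ z, μs x z) * Real.log ((n x - ∑ z, μs x z) / n x))) +
    ∑ y, ((∑ z, μd z y * Real.log (μd z y / m y)) +
      (m y - ∑ z, μd z y) * Real.log ((m y - ∑ z, μd z y) / m y))

/-- The entropic social welfare of a flow in the Logit specification. -/
noncomputable def entWelfare (n : X → ℝ) (m : Y → ℝ) (α : X → Z → ℝ) (γ : Z → Y → ℝ)
    (μs : X → Z → ℝ) (μd : Z → Y → ℝ) : ℝ :=
  (∑ x, ∑ z, μs x z * α x z) + (∑ z, ∑ y, μd z y * γ z y) - entropyE n m μs μd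

/-!
Fix prices `p`. Adding `∑ z, p z * (demand z - supply z)`, which vanishes on feasible flows,
splits the entropic welfare into one term per agent type: expected payoff minus relative entropy,
with payoffs `α x + p` for producers and `γ · y - p` for consumers. By the Gibbs variational
principle such a term is at most `N * log (1 + ∑ exp c)`, the deficit being a sum of
Kullback–Leibler terms that vanishes exactly at the logit choice shares. Hence
`entWelfare ≤ Wlogit p` on feasible flows, with equality iff the flow is the logit flow at `p`.
`Wlogit` is continuous and coercive, so it has a minimizer `p*`, and its first-order condition
says that the logit flow at `p*` clears the market. That flow is then feasible and attains
`Wlogit p*`, so it maximizes the welfare, and every maximizer attains `Wlogit p*` as well.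
-/

open InformationTheory

section LogitShare

variable {ι : Type*} [Fintype ι]

/-- Choice probabilities of a logit agent who also has an outside option of utility `0`. -/
noncomputable def logitShare (c : ι → ℝ) (i : ι) : ℝ :=
  exp (c i) / (1 + ∑ j, exp (c j))

noncomputable def outsideShare (c : ι → ℝ) : ℝ :=
  (1 + ∑ j, exp (c j))⁻¹

lemma outsideShare_pos (c : ι → ℝ) : 0 < outsideShare c := by
  unfold outsideShare; positivity

lemma logitShare_pos (c : ι → ℝ) (i : ι) : 0 < logitShare c i := by
  unfold logitShare; positivity

lemma logitShare_eq_exp_mul_outsideShare (c : ι → ℝ) (i : ι) :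
    logitShare c i = exp (c i) * outsideShare c :=
  div_eq_mul_inv _ _

lemma sum_logitShare_add_outsideShare (c : ι → ℝ) :
    ∑ i, logitShare c i + outsideShare c = 1 := by
  have : 0 < 1 + ∑ j, exp (c j) := by positivity
  simp only [logitShare, outsideShare, ← Finset.sum_div]
  field_simp
  ring

lemma log_outsideShare (c : ι → ℝ) : log (outsideShare c) = -log (1 + ∑ j, exp (c j)) :=
  log_inv _

lemma le_log_one_add_sum_exp (c : ι → ℝ) (i : ι) : c i ≤ log (1 + ∑ j, exp (c j)) := by
  rw [← log_exp (c i)]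
  refine log_le_log (exp_pos _) ?_
  linarith [single_le_sum (fun j _ => (exp_pos (c j)).le) (mem_univ i),
    sum_nonneg fun j (_ : j ∈ univ) => (exp_pos (c j)).le]

lemma log_one_add_sum_exp_nonneg (c : ι → ℝ) : 0 ≤ log (1 + ∑ j, exp (c j)) :=
  log_nonneg (le_add_of_nonneg_right (sum_nonneg fun j _ => (exp_pos (c j)).le))

lemma hasDerivAt_log_one_add_sum_exp (c d : ι → ℝ) :
    HasDerivAt (fun t => log (1 + ∑ i, exp (c i + t * d i))) (∑ i, logitShare c i * d i) 0 := by
  have hexp : ∀ i, HasDerivAt (fun t => exp (c i + t * d i)) (exp (c i) * d i) 0 := fun i => by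
    simpa using (((hasDerivAt_id (0 : ℝ)).mul_const (d i)).const_add (c i)).exp
  have hsum := (HasDerivAt.fun_sum fun i (_ : i ∈ univ) => hexp i).const_add 1
  convert hsum.log (by simp; positivity) using 1
  simp only [logitShare, zero_mul, add_zero, div_mul_eq_mul_div, ← Finset.sum_div]

lemma mul_log_div_mul (a : ℝ) {N t : ℝ} (hN : N ≠ 0) (ht : t ≠ 0) :
    a * log (a / (N * t)) = a * log (a / N) - a * log t := by
  rcases eq_or_ne a 0 with rfl | ha
  · simp
  · rw [log_div ha (mul_ne_zero hN ht), log_mul hN ht, log_div ha hN]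
    ring

lemma mul_klFun_div (a : ℝ) {q : ℝ} (hq : q ≠ 0) :
    q * klFun (a / q) = a * log (a / q) + q - a := by
  rw [klFun_apply]
  field_simp

noncomputable def entropicValue (N : ℝ) (c μ : ι → ℝ) : ℝ :=
  ∑ i, μ i * c i - ((∑ i, μ i * log (μ i / N)) + (N - ∑ i, μ i) * log ((N - ∑ i, μ i) / N))

lemma entropicValue_add_sum_klFun (c μ : ι → ℝ) {N : ℝ} (hN : N ≠ 0) :
    entropicValue N c μ +
        (∑ i, N * logitShare c i * klFun (μ i / (N * logitShare c i)) +
          N * outsideShare c * klFun ((N - ∑ i, μ i) / (N * outsideShare c))) =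
      N * log (1 + ∑ j, exp (c j)) := by
  have hq : ∀ i, N * logitShare c i ≠ 0 := fun i => mul_ne_zero hN (logitShare_pos c i).ne'
  have hq₀ : outsideShare c ≠ 0 := (outsideShare_pos c).ne'
  have hlog : ∀ i, log (logitShare c i) = c i - log (1 + ∑ j, exp (c j)) := fun i => by
    rw [logitShare_eq_exp_mul_outsideShare, log_mul (exp_pos _).ne' hq₀, log_exp,
      log_outsideShare, sub_eq_add_neg]
  have hshares := sum_logitShare_add_outsideShare c
  simp only [mul_klFun_div _ (hq _), mul_klFun_div _ (mul_ne_zero hN hq₀),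
    mul_log_div_mul _ hN (logitShare_pos c _).ne', mul_log_div_mul _ hN hq₀, hlog,
    log_outsideShare, entropicValue, sum_add_distrib, sum_sub_distrib, mul_sub, ← mul_sum,
    ← sum_mul]
  linear_combination N * hshares

variable {N : ℝ} {c μ : ι → ℝ}

lemma entropicValue_le (hN : 0 < N) (hμ : ∀ i, 0 ≤ μ i) (hsum : ∑ i, μ i ≤ N) :
    entropicValue N c μ ≤ N * log (1 + ∑ j, exp (c j)) := by
  rw [← entropicValue_add_sum_klFun c μ hN.ne', le_add_iff_nonneg_right]
  have := outsideShare_pos c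
  refine add_nonneg (sum_nonneg fun i _ => ?_) ?_
  · have := logitShare_pos c i
    exact mul_nonneg (by positivity) (klFun_nonneg (by have := hμ i; positivity))
  · exact mul_nonneg (by positivity) (klFun_nonneg (div_nonneg (by linarith) (by positivity)))

lemma entropicValue_eq_iff (hN : 0 < N) (hμ : ∀ i, 0 ≤ μ i) (hsum : ∑ i, μ i ≤ N) :
    entropicValue N c μ = N * log (1 + ∑ j, exp (c j)) ↔ μ = fun i => N * logitShare c i := by
  have hq : ∀ i, 0 < N * logitShare c i := fun i => mul_pos hN (logitShare_pos c i)
  have hq₀ : 0 < N * outsideShare c := mul_pos hN (outsideShare_pos c)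
  have hterm : ∀ i, 0 ≤ N * logitShare c i * klFun (μ i / (N * logitShare c i)) := fun i =>
    mul_nonneg (hq i).le (klFun_nonneg (div_nonneg (hμ i) (hq i).le))
  have hterm₀ : 0 ≤ N * outsideShare c * klFun ((N - ∑ i, μ i) / (N * outsideShare c)) :=
    mul_nonneg hq₀.le (klFun_nonneg (div_nonneg (by linarith) hq₀.le))
  rw [← entropicValue_add_sum_klFun c μ hN.ne', left_eq_add,
    add_eq_zero_iff_of_nonneg (sum_nonneg fun i _ => hterm i) hterm₀,
    sum_eq_zero_iff_of_nonneg fun i _ => hterm i]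
  constructor
  · rintro ⟨h, -⟩
    funext i
    have := (mul_eq_zero.mp (h i (mem_univ i))).resolve_left (hq i).ne'
    rw [klFun_eq_zero_iff (div_nonneg (hμ i) (hq i).le), div_eq_one_iff_eq (hq i).ne'] at this
    exact this
  · rintro rfl
    have hout : N - ∑ i, N * logitShare c i = N * outsideShare c := by
      rw [← mul_sum]
      linear_combination -N * sum_logitShare_add_outsideShare c
    simp [hout, div_self (hq _).ne', div_self hq₀.ne', klFun_one]

end LogitShare

section Market

variable {X Y Z : Type*} [Fintype X] [Fintype Y] [Fintype Z]
  {n : X → ℝ} {m : Y → ℝ} {α : X → Z → ℝ} {γ : Z → Y → ℝ}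

noncomputable def logitSupply (n : X → ℝ) (α : X → Z → ℝ) (p : Z → ℝ) (x : X) (z : Z) : ℝ :=
  n x * logitShare (fun z => α x z + p z) z

noncomputable def logitDemand (m : Y → ℝ) (γ : Z → Y → ℝ) (p : Z → ℝ) (z : Z) (y : Y) : ℝ :=
  m y * logitShare (fun z => γ z y - p z) z

lemma entWelfare_eq_sum_entropicValue (μs : X → Z → ℝ) (μd : Z → Y → ℝ) (p : Z → ℝ) :
    entWelfare n m α γ μs μd =
      ∑ x, entropicValue (n x) (fun z => α x z + p z) (μs x) +
        ∑ y, entropicValue (m y) (fun z => γ z y - p z) (fun z => μd z y) +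
        ∑ z, p z * (∑ y, μd z y - ∑ x, μs x z) := by
  simp only [entWelfare, entropyE, entropicValue, mul_add, mul_sub, sum_add_distrib,
    sum_sub_distrib, mul_sum]
  rw [sum_comm (s := univ) (f := fun x z => μs x z * p z),
    sum_comm (s := univ) (f := fun y z => μd z y * γ z y),
    sum_comm (s := univ) (f := fun y z => μd z y * p z)]
  simp only [mul_comm (p _)]
  ring

lemma entWelfare_eq_sum_entropicValue_of_clearing {μs : X → Z → ℝ} {μd : Z → Y → ℝ}
    (hclear : ∀ z, ∑ x, μs x z = ∑ y, μd z y) (p : Z → ℝ) :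
    entWelfare n m α γ μs μd =
      ∑ x, entropicValue (n x) (fun z => α x z + p z) (μs x) +
        ∑ y, entropicValue (m y) (fun z => γ z y - p z) (fun z => μd z y) := by
  simp [entWelfare_eq_sum_entropicValue μs μd p, hclear]

lemma hasDerivAt_Wlogit_add_smul_single [DecidableEq Z] (p : Z → ℝ) (z₀ : Z) :
    HasDerivAt (fun t : ℝ => Wlogit n m α γ (p + t • Pi.single z₀ (1 : ℝ)))
      (∑ x, logitSupply n α p x z₀ - ∑ y, logitDemand m γ p z₀ y) 0 := by
  have hsupply := HasDerivAt.fun_sum fun x (_ : x ∈ univ) =>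
    (hasDerivAt_log_one_add_sum_exp (fun z => α x z + p z) (Pi.single z₀ 1)).const_mul (n x)
  have hdemand := HasDerivAt.fun_sum fun y (_ : y ∈ univ) =>
    (hasDerivAt_log_one_add_sum_exp (fun z => γ z y - p z) (-Pi.single z₀ 1)).const_mul (m y)
  refine ((hsupply.add hdemand).congr_deriv ?_).congr_of_eventuallyEq
    (Filter.Eventually.of_forall fun t => ?_)
  · simp [logitSupply, logitDemand, Pi.single_apply, sub_eq_add_neg]
  · simp only [Wlogit, Pi.add_apply, Pi.smul_apply, smul_eq_mul, Pi.neg_apply, mul_neg,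
      ← add_assoc, ← sub_eq_add_neg, sub_add_eq_sub_sub]

lemma sum_logitSupply_eq_sum_logitDemand_of_isMin {p : Z → ℝ}
    (hp : ∀ q, Wlogit n m α γ p ≤ Wlogit n m α γ q) (z : Z) :
    ∑ x, logitSupply n α p x z = ∑ y, logitDemand m γ p z y := by
  classical
  have hmin : IsLocalMin (fun t : ℝ => Wlogit n m α γ (p + t • Pi.single z (1 : ℝ))) 0 :=
    Filter.Eventually.of_forall fun t => by
      simp only [zero_smul, add_zero]
      exact hp _
  exact sub_eq_zero.mp (hmin.hasDerivAt_eq_zero (hasDerivAt_Wlogit_add_smul_single p z))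

lemma continuous_Wlogit : Continuous (Wlogit n m α γ) := by
  unfold Wlogit
  fun_prop (disch := intro; positivity)

variable (hn : ∀ x, 0 < n x) (hm : ∀ y, 0 < m y)
include hn hm

lemma entWelfare_le_Wlogit {μs : X → Z → ℝ} {μd : Z → Y → ℝ} (hf : FeasibleFlow n m μs μd)
    (p : Z → ℝ) : entWelfare n m α γ μs μd ≤ Wlogit n m α γ p := by
  obtain ⟨hs, hd, hsx, hdy, hclear⟩ := hf
  rw [entWelfare_eq_sum_entropicValue_of_clearing hclear p, Wlogit]
  gcongr with x _ y _
  · exact entropicValue_le (hn x) (hs x) (hsx x)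
  · exact entropicValue_le (hm y) (hd · y) (hdy y)

lemma entWelfare_eq_Wlogit_iff {μs : X → Z → ℝ} {μd : Z → Y → ℝ}
    (hf : FeasibleFlow n m μs μd) (p : Z → ℝ) :
    entWelfare n m α γ μs μd = Wlogit n m α γ p ↔
      μs = logitSupply n α p ∧ μd = logitDemand m γ p := by
  obtain ⟨hs, hd, hsx, hdy, hclear⟩ := hf
  have hsupply : ∀ x, entropicValue (n x) (fun z => α x z + p z) (μs x) ≤
      n x * log (1 + ∑ z, exp (α x z + p z)) := fun x =>
    entropicValue_le (hn x) (hs x) (hsx x)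
  have hdemand : ∀ y, entropicValue (m y) (fun z => γ z y - p z) (fun z => μd z y) ≤
      m y * log (1 + ∑ z, exp (γ z y - p z)) := fun y =>
    entropicValue_le (hm y) (hd · y) (hdy y)
  rw [entWelfare_eq_sum_entropicValue_of_clearing hclear p, Wlogit,
    add_eq_add_iff_eq_and_eq (sum_le_sum fun x _ => hsupply x) (sum_le_sum fun y _ => hdemand y),
    sum_eq_sum_iff_of_le fun x _ => hsupply x, sum_eq_sum_iff_of_le fun y _ => hdemand y]
  simp only [mem_univ, true_implies, entropicValue_eq_iff (hn _) (hs _) (hsx _),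
    entropicValue_eq_iff (hm _) (hd · _) (hdy _), funext_iff]
  exact and_congr Iff.rfl forall_comm

lemma feasibleFlow_logit_of_isMin {p : Z → ℝ} (hp : ∀ q, Wlogit n m α γ p ≤ Wlogit n m α γ q) :
    FeasibleFlow n m (logitSupply n α p) (logitDemand m γ p) := by
  have hshare_le : ∀ c : Z → ℝ, ∑ z, logitShare c z ≤ 1 := fun c => by
    linarith [sum_logitShare_add_outsideShare c, outsideShare_pos c]
  refine ⟨fun x z => mul_nonneg (hn x).le (logitShare_pos _ z).le,
    fun z y => mul_nonneg (hm y).le (logitShare_pos _ z).le, fun x => ?_, fun y => ?_,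
    sum_logitSupply_eq_sum_logitDemand_of_isMin hp⟩
  · simpa only [logitSupply, ← mul_sum] using mul_le_of_le_one_right (hn x).le (hshare_le _)
  · simpa only [logitDemand, ← mul_sum] using mul_le_of_le_one_right (hm y).le (hshare_le _)

lemma entWelfare_le_logit_of_isMin {p : Z → ℝ} (hp : ∀ q, Wlogit n m α γ p ≤ Wlogit n m α γ q)
    {μs : X → Z → ℝ} {μd : Z → Y → ℝ} (hf : FeasibleFlow n m μs μd) :
    entWelfare n m α γ μs μd ≤ entWelfare n m α γ (logitSupply n α p) (logitDemand m γ p) := by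
  rw [(entWelfare_eq_Wlogit_iff hn hm (feasibleFlow_logit_of_isMin hn hm hp) p).2 ⟨rfl, rfl⟩]
  exact entWelfare_le_Wlogit hn hm hf p

lemma eq_logit_of_entWelfare_isMax {p : Z → ℝ} (hp : ∀ q, Wlogit n m α γ p ≤ Wlogit n m α γ q)
    {μs : X → Z → ℝ} {μd : Z → Y → ℝ} (hf : FeasibleFlow n m μs μd)
    (hmax : ∀ μs' μd', FeasibleFlow n m μs' μd' →
      entWelfare n m α γ μs' μd' ≤ entWelfare n m α γ μs μd) :
    μs = logitSupply n α p ∧ μd = logitDemand m γ p := by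
  have hstar := feasibleFlow_logit_of_isMin hn hm hp
  refine (entWelfare_eq_Wlogit_iff hn hm hf p).1 (le_antisymm (entWelfare_le_Wlogit hn hm hf p) ?_)
  rw [← (entWelfare_eq_Wlogit_iff hn hm hstar p).2 ⟨rfl, rfl⟩]
  exact hmax _ _ hstar

lemma mul_log_supply_le_Wlogit (p : Z → ℝ) (x : X) :
    n x * log (1 + ∑ z, exp (α x z + p z)) ≤ Wlogit n m α γ p :=
  le_add_of_le_of_nonneg
    (single_le_sum (f := fun x => n x * log (1 + ∑ z, exp (α x z + p z)))
      (fun x _ => mul_nonneg (hn x).le (log_one_add_sum_exp_nonneg _)) (mem_univ x))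
    (sum_nonneg fun y _ => mul_nonneg (hm y).le (log_one_add_sum_exp_nonneg _))

lemma mul_log_demand_le_Wlogit (p : Z → ℝ) (y : Y) :
    m y * log (1 + ∑ z, exp (γ z y - p z)) ≤ Wlogit n m α γ p :=
  le_add_of_nonneg_of_le
    (sum_nonneg fun x _ => mul_nonneg (hn x).le (log_one_add_sum_exp_nonneg _))
    (single_le_sum (f := fun y => m y * log (1 + ∑ z, exp (γ z y - p z)))
      (fun y _ => mul_nonneg (hm y).le (log_one_add_sum_exp_nonneg _)) (mem_univ y))

lemma min_mul_abs_le_Wlogit (p : Z → ℝ) (x : X) (y : Y) (z : Z) :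
    min (n x) (m y) * |p z| ≤ Wlogit n m α γ p + (n x * |α x z| + m y * |γ z y|) := by
  have hsupply : n x * (α x z + p z) ≤ Wlogit n m α γ p :=
    (mul_le_mul_of_nonneg_left (le_log_one_add_sum_exp (fun z => α x z + p z) z) (hn x).le).trans
      (mul_log_supply_le_Wlogit hn hm p x)
  have hdemand : m y * (γ z y - p z) ≤ Wlogit n m α γ p :=
    (mul_le_mul_of_nonneg_left (le_log_one_add_sum_exp (fun z => γ z y - p z) z) (hm y).le).trans
      (mul_log_demand_le_Wlogit hn hm p y)
  have hα := mul_le_mul_of_nonneg_left (neg_abs_le (α x z)) (hn x).le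
  have hγ := mul_le_mul_of_nonneg_left (neg_abs_le (γ z y)) (hm y).le
  have hα₀ := mul_nonneg (hn x).le (abs_nonneg (α x z))
  have hγ₀ := mul_nonneg (hm y).le (abs_nonneg (γ z y))
  rcases abs_cases (p z) with ⟨habs, hpos⟩ | ⟨habs, hneg⟩
  · rw [habs]
    linarith [mul_le_mul_of_nonneg_right (min_le_left (n x) (m y)) hpos]
  · rw [habs]
    linarith [mul_le_mul_of_nonneg_right (min_le_right (n x) (m y)) (neg_nonneg.2 hneg.le)]

lemma exists_forall_Wlogit_le [Nonempty X] [Nonempty Y] :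
    ∃ p, ∀ q, Wlogit n m α γ p ≤ Wlogit n m α γ q := by
  obtain ⟨x⟩ := ‹Nonempty X›
  obtain ⟨y⟩ := ‹Nonempty Y›
  set K := ∑ z, (n x * |α x z| + m y * |γ z y|)
  have hterm : ∀ z, 0 ≤ n x * |α x z| + m y * |γ z y| := fun z => by
    have := hn x; have := hm y; positivity
  have hK : ∀ z, n x * |α x z| + m y * |γ z y| ≤ K := fun z =>
    single_le_sum (f := fun z => n x * |α x z| + m y * |γ z y|) (fun z _ => hterm z) (mem_univ z)
  have hmin : 0 < min (n x) (m y) := lt_min (hn x) (hm y)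
  have hcoercive : ∀ p, min (n x) (m y) * ‖p‖ - K ≤ Wlogit n m α γ p := fun p => by
    have hW : 0 ≤ Wlogit n m α γ p := (mul_nonneg (hn x).le (log_one_add_sum_exp_nonneg _)).trans
      (mul_log_supply_le_Wlogit hn hm p x)
    have hnorm : ‖p‖ ≤ (Wlogit n m α γ p + K) / min (n x) (m y) := by
      have hK₀ : 0 ≤ K := sum_nonneg fun z _ => hterm z
      refine (pi_norm_le_iff_of_nonneg (by positivity)).2 fun z => ?_
      rw [le_div_iff₀' hmin, Real.norm_eq_abs]
      linarith [min_mul_abs_le_Wlogit hn hm (α := α) (γ := γ) p x y z, hK z]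
    rw [le_div_iff₀' hmin] at hnorm
    linarith
  refine continuous_Wlogit.exists_forall_le (Filter.tendsto_atTop_mono hcoercive ?_)
  exact Filter.tendsto_atTop_add_const_right _ _ (tendsto_norm_cocompact_atTop.const_mul_atTop hmin)

end Market

/-- Part of Theorem 3(iii): the entropic welfare has a unique maximizer over feasible flows,
which is given in closed form from any minimizer of the dual welfare over prices. -/
theorem logit_equilibrium_flow_unique (n : X → ℝ) (m : Y → ℝ)
    (hn : ∀ x, 0 < n x) (hm : ∀ y, 0 < m y) (α : X → Z → ℝ) (γ : Z → Y → ℝ) :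
    (∃! μ : (X → Z → ℝ) × (Z → Y → ℝ), FeasibleFlow n m μ.1 μ.2 ∧
        ∀ (μs' : X → Z → ℝ) (μd' : Z → Y → ℝ), FeasibleFlow n m μs' μd' →
          entWelfare n m α γ μs' μd' ≤ entWelfare n m α γ μ.1 μ.2) ∧
      ∀ p : Z → ℝ, (∀ q : Z → ℝ, Wlogit n m α γ p ≤ Wlogit n m α γ q) →
        ∀ μ : (X → Z → ℝ) × (Z → Y → ℝ),
          (FeasibleFlow n m μ.1 μ.2 ∧
            ∀ (μs' : X → Z → ℝ) (μd' : Z → Y → ℝ), FeasibleFlow n m μs' μd' →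
              entWelfare n m α γ μs' μd' ≤ entWelfare n m α γ μ.1 μ.2) →
          μ.1 = (fun x z => n x *
              (Real.exp (α x z + p z) / (1 + ∑ z', Real.exp (α x z' + p z')))) ∧
            μ.2 = fun z y => m y *
              (Real.exp (γ z y - p z) / (1 + ∑ z', Real.exp (γ z' y - p z'))) := by
  obtain ⟨p₀, hp₀⟩ := exists_forall_Wlogit_le hn hm (α := α) (γ := γ)
  refine ⟨⟨(logitSupply n α p₀, logitDemand m γ p₀), ⟨feasibleFlow_logit_of_isMin hn hm hp₀,
    fun _ _ => entWelfare_le_logit_of_isMin hn hm hp₀⟩, ?_⟩, ?_⟩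
  · rintro ⟨μs, μd⟩ ⟨hf, hmax⟩
    exact Prod.ext_iff.2 (eq_logit_of_entWelfare_isMax hn hm hp₀ hf hmax)
  · rintro p hp ⟨μs, μd⟩ ⟨hf, hmax⟩
    exact eq_logit_of_entWelfare_isMax hn hm hp hf hmax
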